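/- arXiv:math/0607065 — 7 statements merged into one kernel-verified Lean document; each statement's English description precedes it below -/
import Mathlib

section
/- Let E ⊆ ℂⁿ be a subspace and Γ : ℂⁿ → ℂᵐ a linear map with rank Γ = dim E = m. If the modulus of the n×n determinant formed from orthonormal bases of E and of ker Γ is at least c > 0, then there is a constant C, depending only on c and the operator norm of Γ*(ΓΓ*)⁻¹, such that |U| ≤ C|ΓU| for all U ∈ E. -/
open scoped ComplexOrder

open Matrix Finset in
private lemma star_dp_self {ι : Type*} [Fintype ι] (x : ι → ℂ) :
    star x ⬝ᵥ x = ((∑ i, Complex.normSq (x i) : ℝ) : ℂ) := by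
  simp only [dotProduct, Pi.star_apply, Complex.ofReal_sum, RCLike.star_def,
    Complex.normSq_eq_conj_mul_self]

/-- Orthonormal expansion of the squared norm. -/
private lemma norm_sq_sum_smul {ι : Type*} [Fintype ι] {E : Type*} [NormedAddCommGroup E]
    [InnerProductSpace ℂ E] {v : ι → E} (hv : Orthonormal ℂ v) (x : ι → ℂ) :
    ‖∑ i, x i • v i‖ ^ 2 = ∑ i, Complex.normSq (x i) := by
  have h2 : inner (𝕜 := ℂ) (∑ i, x i • v i) (∑ i, x i • v i)
      = ∑ i, (starRingEnd ℂ) (x i) * x i := hv.inner_sum x x Finset.univ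
  have h3 := inner_self_eq_norm_sq (𝕜 := ℂ) (∑ i, x i • v i)
  rw [h2] at h3
  rw [← h3, RCLike.re_to_complex, Complex.re_sum]
  exact Finset.sum_congr rfl fun i _ => by
    rw [← Complex.normSq_eq_conj_mul_self, Complex.ofReal_re]

open Matrix Finset in
/-- Quadratic-form lower bound for a PSD contraction in terms of its determinant. -/
private lemma quad_key {m : ℕ} {A : Matrix (Fin m) (Fin m) ℂ} (hA : A.PosSemidef)
    (hA1 : (1 - A).PosSemidef) (α : Fin m → ℂ) :
    A.det.re * (∑ i, Complex.normSq (α i)) ≤ (star α ⬝ᵥ A *ᵥ α).re := by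
  classical
  have hH : A.IsHermitian := hA.1
  set lam : Fin m → ℝ := hH.eigenvalues with hlam
  have h0 : ∀ i, 0 ≤ lam i := hA.eigenvalues_nonneg
  have h1 : ∀ i, lam i ≤ 1 := by
    intro i
    set v : Fin m → ℂ := ⇑(hH.eigenvectorBasis i) with hv
    have hvpos : 0 < ∑ j, Complex.normSq (v j) := by
      have hn : ‖hH.eigenvectorBasis i‖ = 1 := hH.eigenvectorBasis.orthonormal.1 i
      rw [EuclideanSpace.norm_eq] at hn
      have h2 := congrArg (· ^ 2) hn
      simp only [Real.sq_sqrt (Finset.sum_nonneg fun j _ => sq_nonneg _), one_pow] at h2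
      have h3 : ∑ j, Complex.normSq (v j) = 1 := by
        rw [← h2]
        exact Finset.sum_congr rfl fun j _ => by
          exact Complex.normSq_eq_norm_sq _
      rw [h3]; norm_num
    have h := hA1.dotProduct_mulVec_nonneg v
    rw [sub_mulVec, one_mulVec, hH.mulVec_eigenvectorBasis i] at h
    rw [dotProduct_sub, dotProduct_smul, star_dp_self] at h
    have h' : (0:ℝ) ≤ (∑ j, Complex.normSq (v j)) - lam i * (∑ j, Complex.normSq (v j)) := by
      rw [Complex.real_smul, ← Complex.ofReal_mul, ← Complex.ofReal_sub,
        Complex.zero_le_real] at h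
      exact h
    nlinarith [hvpos, h']
  have hdetprod : A.det.re = ∏ i, lam i := by
    rw [hH.det_eq_prod_eigenvalues]
    norm_cast
  have hmin : ∀ i, (∏ j, lam j) ≤ lam i := by
    intro i
    rw [← Finset.mul_prod_erase univ lam (mem_univ i)]
    calc lam i * ∏ j ∈ univ.erase i, lam j
        ≤ lam i * 1 := by
          refine mul_le_mul_of_nonneg_left ?_ (h0 i)
          exact Finset.prod_le_one (fun j _ => h0 j) (fun j _ => h1 j)
      _ = lam i := mul_one _
  set Uu : Matrix (Fin m) (Fin m) ℂ := (hH.eigenvectorUnitary : Matrix (Fin m) (Fin m) ℂ) with hUu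
  set β : Fin m → ℂ := star Uu *ᵥ α with hβdef
  have hβ : star α ᵥ* Uu = star β := by
    rw [hβdef, star_mulVec, star_eq_conjTranspose, conjTranspose_conjTranspose]
  have hsp : star α ⬝ᵥ A *ᵥ α = star β ⬝ᵥ (diagonal (RCLike.ofReal ∘ lam) *ᵥ β) := by
    conv_lhs => rw [hH.spectral_theorem, Unitary.conjStarAlgAut_apply, ← Unitary.coe_star]
    rw [← mulVec_mulVec, ← mulVec_mulVec, dotProduct_mulVec, hβ]
    rfl
  have hunit : Uu * star Uu = 1 := mem_unitaryGroup_iff.mp (hH.eigenvectorUnitary).2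
  have hnorm : star β ⬝ᵥ β = star α ⬝ᵥ α := by
    calc star β ⬝ᵥ β = (star α ᵥ* Uu) ⬝ᵥ (star Uu *ᵥ α) := by rw [hβ]
      _ = star α ⬝ᵥ ((Uu * star Uu) *ᵥ α) := by rw [← dotProduct_mulVec, mulVec_mulVec]
      _ = star α ⬝ᵥ α := by rw [hunit, one_mulVec]
  have hsum : ∑ i, Complex.normSq (β i) = ∑ i, Complex.normSq (α i) := by
    have h := hnorm
    rw [star_dp_self, star_dp_self] at h
    exact_mod_cast h
  have hterm : ∀ (l : ℝ) (z : ℂ),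
      (starRingEnd ℂ) z * ((l : ℂ) * z) = ((l * Complex.normSq z : ℝ) : ℂ) := by
    intro l z
    rw [Complex.ofReal_mul, Complex.normSq_eq_conj_mul_self]
    ring
  have hdiag : star β ⬝ᵥ (diagonal (RCLike.ofReal ∘ lam) *ᵥ β)
      = ((∑ i, lam i * Complex.normSq (β i) : ℝ) : ℂ) := by
    rw [dotProduct, Complex.ofReal_sum]
    refine Finset.sum_congr rfl fun i _ => ?_
    rw [mulVec_diagonal]
    simpa using hterm (lam i) (β i)
  rw [hsp, hdiag, Complex.ofReal_re, hdetprod, ← hsum, Finset.mul_sum]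
  exact Finset.sum_le_sum fun i _ =>
    mul_le_mul_of_nonneg_right (hmin i) (Complex.normSq_nonneg _)

open Matrix Finset in
/-- The quantitative transversality estimate. -/
private lemma key_geom {n m k : ℕ} (hk : m + k = n) {c : ℝ} (hc : 0 ≤ c)
    {e : Fin m → EuclideanSpace ℂ (Fin n)} {f : Fin k → EuclideanSpace ℂ (Fin n)}
    (he : Orthonormal ℂ e) (hf : Orthonormal ℂ f)
    (hdet : c ≤ ‖(Matrix.det (Matrix.of fun i j : Fin n =>
      Sum.elim (fun a => e a i) (fun b => f b i) (finSumFinEquiv.symm (Fin.cast hk.symm j))))‖)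
    (α : Fin m → ℂ) (γ : Fin k → ℂ) :
    c * ‖∑ a, α a • e a‖ ≤ ‖(∑ a, α a • e a) - ∑ b, γ b • f b‖ := by
  classical
  set X : Matrix (Fin m) (Fin k) ℂ :=
    Matrix.of (fun a b => inner (𝕜 := ℂ) (e a) (f b)) with hX
  set A : Matrix (Fin m) (Fin m) ℂ := 1 - X * Xᴴ with hA
  have ht : ∀ (x : Fin m → ℂ) (b : Fin k),
      (Xᴴ *ᵥ x) b = inner (𝕜 := ℂ) (f b) (∑ a, x a • e a) := by
    intro x b
    rw [inner_sum]
    simp only [inner_smul_right]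
    rw [Matrix.mulVec, dotProduct]
    refine Finset.sum_congr rfl fun a _ => ?_
    rw [Matrix.conjTranspose_apply, hX]
    simp only [Matrix.of_apply]
    rw [RCLike.star_def, inner_conj_symm]
    ring
  have hbessel : ∀ x : Fin m → ℂ,
      ∑ b, Complex.normSq ((Xᴴ *ᵥ x) b) ≤ ∑ a, Complex.normSq (x a) := by
    intro x
    have h1 := hf.sum_inner_products_le (s := Finset.univ) (∑ a, x a • e a)
    rw [norm_sq_sum_smul he x] at h1
    calc ∑ b, Complex.normSq ((Xᴴ *ᵥ x) b)
        = ∑ b, ‖inner (𝕜 := ℂ) (f b) (∑ a, x a • e a)‖ ^ 2 := by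
          refine Finset.sum_congr rfl fun b _ => ?_
          rw [ht x b, Complex.normSq_eq_norm_sq]
      _ ≤ ∑ a, Complex.normSq (x a) := h1
  have hform : ∀ x : Fin m → ℂ, star x ⬝ᵥ A *ᵥ x
      = (((∑ a, Complex.normSq (x a)) - ∑ b, Complex.normSq ((Xᴴ *ᵥ x) b) : ℝ) : ℂ) := by
    intro x
    have hxx : star x ⬝ᵥ (X * Xᴴ) *ᵥ x = star (Xᴴ *ᵥ x) ⬝ᵥ (Xᴴ *ᵥ x) := by
      rw [← mulVec_mulVec, dotProduct_mulVec, star_mulVec, conjTranspose_conjTranspose]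
    rw [hA, sub_mulVec, one_mulVec, dotProduct_sub, hxx, star_dp_self, star_dp_self,
      ← Complex.ofReal_sub]
  have hAps : A.PosSemidef := by
    refine posSemidef_iff_dotProduct_mulVec.mpr ?_
    constructor
    · rw [hA, Matrix.IsHermitian, Matrix.conjTranspose_sub, Matrix.conjTranspose_one,
        Matrix.conjTranspose_mul, Matrix.conjTranspose_conjTranspose]
    · intro x
      rw [hform x, Complex.zero_le_real]
      exact sub_nonneg.mpr (hbessel x)
  have hA1 : (1 - A).PosSemidef := by
    have h : 1 - A = X * Xᴴ := by rw [hA, sub_sub_cancel]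
    rw [h]
    exact posSemidef_self_mul_conjTranspose X
  -- the determinant identity
  set σ : Fin m ⊕ Fin k ≃ Fin n := finSumFinEquiv.trans (finCongr hk) with hσ
  set M : Matrix (Fin n) (Fin n) ℂ := Matrix.of (fun i j : Fin n =>
      Sum.elim (fun a => e a i) (fun b => f b i) (finSumFinEquiv.symm (Fin.cast hk.symm j)))
    with hM
  set g : Fin m ⊕ Fin k → EuclideanSpace ℂ (Fin n) := Sum.elim e f with hg
  have hMsub : ∀ (r p : Fin m ⊕ Fin k), M.submatrix σ σ r p = g p (σ r) := by
    intro r p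
    rw [hM]
    simp only [Matrix.submatrix_apply, Matrix.of_apply]
    have : finSumFinEquiv.symm (Fin.cast hk.symm (σ p)) = p := by
      rw [hσ]
      simp [Equiv.trans, finCongr]
    rw [this, hg]
    cases p <;> rfl
  have hentry : ∀ p q : Fin m ⊕ Fin k,
      ((M.submatrix σ σ)ᴴ * M.submatrix σ σ) p q = inner (𝕜 := ℂ) (g p) (g q) := by
    intro p q
    rw [Matrix.mul_apply, PiLp.inner_apply]
    rw [← Equiv.sum_comp σ (fun i => inner (𝕜 := ℂ) (g p i) (g q i))]
    refine Finset.sum_congr rfl fun r _ => ?_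
    rw [Matrix.conjTranspose_apply, hMsub, hMsub, RCLike.inner_apply, RCLike.star_def, mul_comm]
  have hMN : (M.submatrix σ σ)ᴴ * (M.submatrix σ σ) = fromBlocks 1 X Xᴴ 1 := by
    ext p q
    rw [hentry p q]
    cases p with
    | inl a => cases q with
      | inl a' =>
        rw [hg]
        simp only [Sum.elim_inl, fromBlocks_apply₁₁, Matrix.one_apply]
        exact orthonormal_iff_ite.mp he a a'
      | inr b =>
        rw [hg]
        simp only [Sum.elim_inl, Sum.elim_inr, fromBlocks_apply₁₂, hX, Matrix.of_apply]
    | inr b => cases q with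
      | inl a =>
        rw [hg]
        simp only [Sum.elim_inl, Sum.elim_inr, fromBlocks_apply₂₁, Matrix.conjTranspose_apply,
          hX, Matrix.of_apply, RCLike.star_def, inner_conj_symm]
      | inr b' =>
        rw [hg]
        simp only [Sum.elim_inr, fromBlocks_apply₂₂, Matrix.one_apply]
        exact orthonormal_iff_ite.mp hf b b'
  have hdetA : c ^ 2 ≤ A.det.re := by
    have h1 : A.det = ((‖M.det‖ ^ 2 : ℝ) : ℂ) := by
      have h2 : A.det = (fromBlocks (1 : Matrix (Fin m) (Fin m) ℂ) X Xᴴ 1).det := by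
        rw [det_fromBlocks_one₂₂, hA]
      rw [h2, ← hMN, det_mul, det_conjTranspose, det_submatrix_equiv_self, RCLike.star_def,
        ← Complex.normSq_eq_conj_mul_self, Complex.normSq_eq_norm_sq]
    rw [h1, Complex.ofReal_re]
    exact pow_le_pow_left₀ hc hdet 2
  -- assemble
  have hquad := quad_key hAps hA1 α
  rw [hform α, Complex.ofReal_re] at hquad
  set t : Fin k → ℂ := Xᴴ *ᵥ α with htdef
  have hUnorm : ‖∑ a, α a • e a‖ ^ 2 = ∑ a, Complex.normSq (α a) := norm_sq_sum_smul he α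
  have hwnorm : ‖∑ b, γ b • f b‖ ^ 2 = ∑ b, Complex.normSq (γ b) := norm_sq_sum_smul hf γ
  have hcross : RCLike.re (inner (𝕜 := ℂ) (∑ a, α a • e a) (∑ b, γ b • f b))
      = ∑ b, ((starRingEnd ℂ) (γ b) * t b).re := by
    have h1 : inner (𝕜 := ℂ) (∑ b, γ b • f b) (∑ a, α a • e a)
        = ∑ b, (starRingEnd ℂ) (γ b) * t b := by
      rw [sum_inner]
      refine Finset.sum_congr rfl fun b _ => ?_
      rw [inner_smul_left, ← ht α b, htdef]
    have h2 : inner (𝕜 := ℂ) (∑ a, α a • e a) (∑ b, γ b • f b)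
        = (starRingEnd ℂ) (∑ b, (starRingEnd ℂ) (γ b) * t b) := by
      rw [← h1, inner_conj_symm]
    rw [h2, RCLike.re_to_complex, Complex.conj_re, Complex.re_sum]
  have hbb : ∀ b : Fin k, -Complex.normSq (t b)
      ≤ Complex.normSq (γ b) - 2 * ((starRingEnd ℂ) (γ b) * t b).re := by
    intro b
    have h1 := Complex.normSq_nonneg (γ b - t b)
    rw [Complex.normSq_sub] at h1
    have h2 : (γ b * (starRingEnd ℂ) (t b)).re = ((starRingEnd ℂ) (γ b) * t b).re := by
      rw [← Complex.conj_re (γ b * (starRingEnd ℂ) (t b)), _root_.map_mul, Complex.conj_conj]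
    linarith
  have hlow : (∑ a, Complex.normSq (α a)) - ∑ b, Complex.normSq (t b)
      ≤ ‖(∑ a, α a • e a) - ∑ b, γ b • f b‖ ^ 2 := by
    rw [norm_sub_sq (𝕜 := ℂ), hUnorm, hwnorm, hcross]
    have h3 : ∑ b, (-Complex.normSq (t b))
        ≤ ∑ b, (Complex.normSq (γ b) - 2 * ((starRingEnd ℂ) (γ b) * t b).re) :=
      Finset.sum_le_sum fun b _ => hbb b
    rw [Finset.sum_neg_distrib] at h3
    rw [Finset.sum_sub_distrib] at h3
    rw [← Finset.mul_sum] at h3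
    linarith
  have hSnn : (0:ℝ) ≤ ∑ a, Complex.normSq (α a) :=
    Finset.sum_nonneg fun a _ => Complex.normSq_nonneg _
  have hfinal : (c * ‖∑ a, α a • e a‖) ^ 2
      ≤ ‖(∑ a, α a • e a) - ∑ b, γ b • f b‖ ^ 2 := by
    rw [mul_pow, hUnorm]
    calc c ^ 2 * ∑ a, Complex.normSq (α a)
        ≤ A.det.re * ∑ a, Complex.normSq (α a) :=
          mul_le_mul_of_nonneg_right hdetA hSnn
      _ ≤ (∑ a, Complex.normSq (α a)) - ∑ b, Complex.normSq (t b) := hquad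
      _ ≤ _ := hlow
  nlinarith [hfinal, norm_nonneg ((∑ a, α a • e a) - ∑ b, γ b • f b),
    mul_nonneg hc (norm_nonneg (∑ a, α a • e a))]

/-- If the modulus of the determinant formed from orthonormal bases of `E`
and of `ker Γ` is at least `c > 0`, then `‖U‖ ≤ C ‖Γ U‖` on `E`, with
`C = ‖Γ*(ΓΓ*)⁻¹‖ / c` depending only on `c` and `‖Γ*(ΓΓ*)⁻¹‖`. -/
theorem stmt_0 (n m k : ℕ) (hk : m + k = n)
    (E : Submodule ℂ (EuclideanSpace ℂ (Fin n)))
    (Γ : EuclideanSpace ℂ (Fin n) →L[ℂ] EuclideanSpace ℂ (Fin m))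
    (hrank : LinearMap.rank (Γ : EuclideanSpace ℂ (Fin n) →ₗ[ℂ] EuclideanSpace ℂ (Fin m)) = m)
    (hdim : Module.finrank ℂ E = m)
    (B : EuclideanSpace ℂ (Fin m) →L[ℂ] EuclideanSpace ℂ (Fin m))
    (hB : (Γ.comp (ContinuousLinearMap.adjoint Γ)).comp B = ContinuousLinearMap.id ℂ _)
    (hB' : B.comp (Γ.comp (ContinuousLinearMap.adjoint Γ)) = ContinuousLinearMap.id ℂ _)
    (c : ℝ) (hc : 0 < c)
    (e : Fin m → EuclideanSpace ℂ (Fin n)) (f : Fin k → EuclideanSpace ℂ (Fin n))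
    (he : Orthonormal ℂ e) (hf : Orthonormal ℂ f)
    (heE : Submodule.span ℂ (Set.range e) = E)
    (hfK : Submodule.span ℂ (Set.range f) = LinearMap.ker (Γ : EuclideanSpace ℂ (Fin n) →ₗ[ℂ] EuclideanSpace ℂ (Fin m)))
    (hdet : c ≤ ‖(Matrix.det (Matrix.of fun i j : Fin n =>
      Sum.elim (fun a => e a i) (fun b => f b i) (finSumFinEquiv.symm (Fin.cast hk.symm j))))‖) :
    ∀ U ∈ E, ‖U‖ ≤ (‖(ContinuousLinearMap.adjoint Γ).comp B‖ / c) * ‖Γ U‖ := by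
  intro U hU
  set T := (ContinuousLinearMap.adjoint Γ).comp B with hT
  set v := T (Γ U) with hv
  have hΓv : Γ v = Γ U := by
    have h := congrArg (fun L : EuclideanSpace ℂ (Fin m) →L[ℂ] EuclideanSpace ℂ (Fin m) =>
      L (Γ U)) hB
    simpa [hv, hT] using h
  have hwker : U - v ∈ LinearMap.ker (Γ : EuclideanSpace ℂ (Fin n) →ₗ[ℂ] EuclideanSpace ℂ (Fin m)) := by
    rw [LinearMap.mem_ker]
    show Γ (U - v) = 0
    rw [map_sub, hΓv, sub_self]
  obtain ⟨α, hα⟩ := (Submodule.mem_span_range_iff_exists_fun ℂ).mp (heE.symm ▸ hU)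
  obtain ⟨γ, hγ⟩ := (Submodule.mem_span_range_iff_exists_fun ℂ).mp (hfK.symm ▸ hwker)
  have hkey := key_geom hk hc.le he hf hdet α γ
  rw [hα, hγ, sub_sub_cancel] at hkey
  have h3 : ‖v‖ ≤ ‖T‖ * ‖Γ U‖ := T.le_opNorm (Γ U)
  rw [div_mul_eq_mul_div, le_div_iff₀ hc]
  calc ‖U‖ * c = c * ‖U‖ := mul_comm _ _
    _ ≤ ‖v‖ := hkey
    _ ≤ ‖T‖ * ‖Γ U‖ := h3
end

section
/- Let E ⊆ ℂⁿ be a subspace and Γ : ℂⁿ → ℂᵐ a linear map with rank Γ = dim E = m. If there is C > 0 with |U| ≤ C|ΓU| for all U ∈ E, then |det(E, ker Γ)| ≥ (C‖Γ‖)^{-m}, where det(E, ker Γ) is the determinant formed from orthonormal bases of E and ker Γ. -/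
open Matrix Module

noncomputable section

local notation "⟪" x ", " y "⟫" => inner (𝕜 := ℂ) x y

lemma my_eig_eq {m : ℕ} (A : Matrix (Fin m) (Fin m) ℂ) (i : Fin m) :
    (isHermitian_conjTranspose_mul_self A).eigenvalues i
      = ‖toEuclideanLin A ((isHermitian_conjTranspose_mul_self A).eigenvectorBasis i)‖ ^ 2 := by
  set hH := isHermitian_conjTranspose_mul_self A with hHdef
  set v : EuclideanSpace ℂ (Fin m) := hH.eigenvectorBasis i with hv
  have hv1 : ‖v‖ = 1 := hH.eigenvectorBasis.orthonormal.1 i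
  have h1 : toEuclideanLin (Aᴴ * A) v = (hH.eigenvalues i : ℂ) • v := by
    have := hH.mulVec_eigenvectorBasis i
    rw [toEuclideanLin_apply]
    ext j
    have := congrFun this j
    simpa [Complex.real_smul] using this
  have h2 : ⟪v, toEuclideanLin (Aᴴ * A) v⟫ = (hH.eigenvalues i : ℂ) := by
    rw [h1, inner_smul_right, inner_self_eq_norm_sq_to_K, hv1]
    norm_num
  have h3 : toEuclideanLin (Aᴴ * A) v
      = LinearMap.adjoint (toEuclideanLin A) (toEuclideanLin A v) := by
    rw [← toEuclideanLin_conjTranspose_eq_adjoint]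
    rw [toEuclideanLin_eq_toLin, toLin_mul (v₂ := PiLp.basisFun 2 ℂ (Fin m))]
    rfl
  have h4 : ⟪v, toEuclideanLin (Aᴴ * A) v⟫ = (‖toEuclideanLin A v‖ ^ 2 : ℝ) := by
    rw [h3, LinearMap.adjoint_inner_right, inner_self_eq_norm_sq_to_K]
    norm_num
  rw [h2] at h4
  exact_mod_cast h4

lemma my_abs_det_sq {m : ℕ} (A : Matrix (Fin m) (Fin m) ℂ) :
    (‖A.det‖) ^ 2 = ∏ i, (isHermitian_conjTranspose_mul_self A).eigenvalues i := by
  have h := (isHermitian_conjTranspose_mul_self A).det_eq_prod_eigenvalues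
  rw [det_mul, det_conjTranspose] at h
  have : (star A.det) * A.det = ((‖A.det‖ : ℂ)) ^ 2 := by
    rw [Complex.star_def, mul_comm, Complex.mul_conj, Complex.normSq_eq_norm_sq]
    push_cast; ring
  rw [this] at h
  have h2 : ((‖A.det‖ ^ 2 : ℝ) : ℂ) = ((∏ i, (isHermitian_conjTranspose_mul_self A).eigenvalues i : ℝ) : ℂ) := by
    push_cast
    exact h
  exact_mod_cast h2

lemma my_det_lower {m : ℕ} (A : Matrix (Fin m) (Fin m) ℂ) {c : ℝ} (hc : 0 ≤ c)
    (h : ∀ x : EuclideanSpace ℂ (Fin m), c * ‖x‖ ≤ ‖toEuclideanLin A x‖) :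
    c ^ m ≤ ‖A.det‖ := by
  have key : (c ^ m) ^ 2 ≤ (‖A.det‖) ^ 2 := by
    rw [my_abs_det_sq]
    calc (c ^ m) ^ 2 = ∏ _i : Fin m, c ^ 2 := by
          rw [Finset.prod_const, Finset.card_univ, Fintype.card_fin, ← pow_mul, ← pow_mul,
            Nat.mul_comm]
      _ ≤ ∏ i, (isHermitian_conjTranspose_mul_self A).eigenvalues i := by
          apply Finset.prod_le_prod (fun i _ => by positivity)
          intro i _
          rw [my_eig_eq]
          have h1 := h ((isHermitian_conjTranspose_mul_self A).eigenvectorBasis i)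
          rw [(isHermitian_conjTranspose_mul_self A).eigenvectorBasis.orthonormal.1 i, mul_one] at h1
          exact pow_le_pow_left₀ hc h1 2
  have h1 : 0 ≤ c ^ m := pow_nonneg hc m
  nlinarith [norm_nonneg A.det]

lemma my_det_upper {m : ℕ} (A : Matrix (Fin m) (Fin m) ℂ) {c : ℝ} (hc : 0 ≤ c)
    (h : ∀ x : EuclideanSpace ℂ (Fin m), ‖toEuclideanLin A x‖ ≤ c * ‖x‖) :
    ‖A.det‖ ≤ c ^ m := by
  have key : (‖A.det‖) ^ 2 ≤ (c ^ m) ^ 2 := by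
    rw [my_abs_det_sq]
    calc ∏ i, (isHermitian_conjTranspose_mul_self A).eigenvalues i
        ≤ ∏ _i : Fin m, c ^ 2 := by
          apply Finset.prod_le_prod
          · intro i _; rw [my_eig_eq]; positivity
          · intro i _
            rw [my_eig_eq]
            have h1 := h ((isHermitian_conjTranspose_mul_self A).eigenvectorBasis i)
            rw [(isHermitian_conjTranspose_mul_self A).eigenvectorBasis.orthonormal.1 i, mul_one] at h1
            exact pow_le_pow_left₀ (norm_nonneg _) h1 2
      _ = (c ^ m) ^ 2 := by
          rw [Finset.prod_const, Finset.card_univ, Fintype.card_fin, ← pow_mul, ← pow_mul,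
            Nat.mul_comm]
  have h1 : 0 ≤ c ^ m := pow_nonneg hc m
  nlinarith [norm_nonneg A.det]

lemma euclid_sum_apply {n : ℕ} {ι : Type*} (s : Finset ι)
    (F : ι → EuclideanSpace ℂ (Fin n)) (i : Fin n) :
    (∑ j ∈ s, F j) i = ∑ j ∈ s, F j i := by
  classical
  induction s using Finset.induction with
  | empty => rfl
  | insert _ _ h ih => rw [Finset.sum_insert h, Finset.sum_insert h, ← ih]; rfl


lemma my_abs_det_orthonormal {n : ℕ} (w : Fin n → EuclideanSpace ℂ (Fin n))
    (hw : Orthonormal ℂ w) :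
    ‖(Matrix.of fun i p => w p i).det‖ = 1 := by
  set N : Matrix (Fin n) (Fin n) ℂ := Matrix.of fun i p => w p i with hN
  have hNunit : Nᴴ * N = 1 := by
    ext p q
    rw [Matrix.mul_apply, Matrix.one_apply]
    have h1 := orthonormal_iff_ite.mp hw p q
    rw [PiLp.inner_apply] at h1
    rw [← h1]
    refine Finset.sum_congr rfl fun i _ => ?_
    simp [hN, Matrix.conjTranspose_apply, RCLike.inner_apply, mul_comm]
  have h1 : star N.det * N.det = 1 := by
    have h2 := congrArg Matrix.det hNunit
    rwa [Matrix.det_mul, Matrix.det_conjTranspose, Matrix.det_one] at h2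
  have h3 : ((‖N.det‖ : ℂ)) ^ 2 = 1 := by
    rw [← h1, Complex.star_def, mul_comm, Complex.mul_conj, Complex.normSq_eq_norm_sq]
    push_cast; ring
  have h4 : (‖N.det‖) ^ 2 = 1 := by exact_mod_cast h3
  nlinarith [norm_nonneg N.det]

lemma my_exp {n : ℕ} {ι : Type*} [Fintype ι] (v : ι → EuclideanSpace ℂ (Fin n))
    (hv : Orthonormal ℂ v) (hcard : Fintype.card ι = n)
    (x : EuclideanSpace ℂ (Fin n)) :
    x = ∑ s, (inner ℂ (v s) x : ℂ) • v s := by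
  rcases isEmpty_or_nonempty ι with h | h
  · have hn : n = 0 := by
      rw [← hcard]; exact (Fintype.card_eq_zero_iff.mpr h).symm ▸ rfl
    subst hn
    apply Subsingleton.elim
  · have hcard' : Fintype.card ι = finrank ℂ (EuclideanSpace ℂ (Fin n)) := by
      rw [finrank_euclideanSpace_fin, hcard]
    have hspan : ⊤ ≤ Submodule.span ℂ (Set.range v) := by
      rw [← coe_basisOfOrthonormalOfCardEqFinrank hv hcard']
      exact (Basis.span_eq _).ge
    have := (OrthonormalBasis.mk hv hspan).sum_repr' x
    simpa [OrthonormalBasis.coe_mk] using this.symm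

lemma my_norm_sum {n m : ℕ} (p : Fin m → EuclideanSpace ℂ (Fin n))
    (hp : Orthonormal ℂ p) (x : EuclideanSpace ℂ (Fin m)) :
    ‖∑ a, x a • p a‖ = ‖x‖ := by
  have h1 : (inner ℂ (∑ a, x a • p a) (∑ a, x a • p a) : ℂ)
      = ∑ a, (starRingEnd ℂ) (x a) * x a := hp.inner_sum x x Finset.univ
  have h2 : (inner ℂ (∑ a, x a • p a) (∑ a, x a • p a) : ℂ) = ((∑ a, ‖x a‖ ^ 2 : ℝ) : ℂ) := by
    rw [h1]
    push_cast
    refine Finset.sum_congr rfl fun a _ => ?_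
    rw [mul_comm, Complex.mul_conj, Complex.normSq_eq_norm_sq]
    push_cast
    ring
  have h3 : ‖∑ a, x a • p a‖ ^ 2 = ∑ a, ‖x a‖ ^ 2 := by
    rw [norm_sq_eq_re_inner (𝕜 := ℂ), h2]
    norm_cast
  have h4 : ‖x‖ ^ 2 = ∑ a, ‖x a‖ ^ 2 := by
    rw [EuclideanSpace.norm_eq, Real.sq_sqrt (by positivity)]
  have h5 : ‖∑ a, x a • p a‖ ^ 2 = ‖x‖ ^ 2 := by rw [h3, h4]
  nlinarith [norm_nonneg (∑ a, x a • p a), norm_nonneg x]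

/-- If `‖U‖ ≤ C ‖Γ U‖` on `E`, then the modulus of the determinant formed
from orthonormal bases of `E` and of `ker Γ` is at least `(C ‖Γ‖)⁻ᵐ`. -/
theorem stmt_1 (n m k : ℕ) (hk : m + k = n)
    (E : Submodule ℂ (EuclideanSpace ℂ (Fin n)))
    (Γ : EuclideanSpace ℂ (Fin n) →L[ℂ] EuclideanSpace ℂ (Fin m))
    (hrank : LinearMap.rank (Γ : EuclideanSpace ℂ (Fin n) →ₗ[ℂ] EuclideanSpace ℂ (Fin m)) = m)
    (hdim : Module.finrank ℂ E = m)
    (C : ℝ) (hC : 0 < C)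
    (hest : ∀ U ∈ E, ‖U‖ ≤ C * ‖Γ U‖)
    (e : Fin m → EuclideanSpace ℂ (Fin n)) (f : Fin k → EuclideanSpace ℂ (Fin n))
    (he : Orthonormal ℂ e) (hf : Orthonormal ℂ f)
    (heE : Submodule.span ℂ (Set.range e) = E)
    (hfK : Submodule.span ℂ (Set.range f) = LinearMap.ker (Γ : EuclideanSpace ℂ (Fin n) →ₗ[ℂ] EuclideanSpace ℂ (Fin m))) :
    ((C * ‖Γ‖)⁻¹) ^ m ≤ ‖(Matrix.det (Matrix.of fun i j : Fin n =>
      Sum.elim (fun a => e a i) (fun b => f b i) (finSumFinEquiv.symm (Fin.cast hk.symm j))))‖ := by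
  classical
  set F : Submodule ℂ (EuclideanSpace ℂ (Fin n)) := LinearMap.ker (Γ : EuclideanSpace ℂ (Fin n) →ₗ[ℂ] EuclideanSpace ℂ (Fin m)) with hFdef
  have heE' : ∀ a, e a ∈ E := fun a => heE ▸ Submodule.subset_span ⟨a, rfl⟩
  have hfF : ∀ b, f b ∈ F := fun b => hfK ▸ Submodule.subset_span ⟨b, rfl⟩
  have hΓf : ∀ b, Γ (f b) = 0 := fun b => hfF b
  have htot : finrank ℂ (EuclideanSpace ℂ (Fin n)) = n := finrank_euclideanSpace_fin
  have hrange : finrank ℂ (LinearMap.range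
      (Γ : EuclideanSpace ℂ (Fin n) →ₗ[ℂ] EuclideanSpace ℂ (Fin m))) = m :=
    finrank_eq_of_rank_eq hrank
  have hker : finrank ℂ F = k := by
    have h1 := LinearMap.finrank_range_add_finrank_ker
      (Γ : EuclideanSpace ℂ (Fin n) →ₗ[ℂ] EuclideanSpace ℂ (Fin m))
    have h2 : LinearMap.ker (Γ : EuclideanSpace ℂ (Fin n) →ₗ[ℂ] EuclideanSpace ℂ (Fin m)) = F :=
      rfl
    rw [htot, hrange, h2] at h1
    omega
  have hFp : finrank ℂ Fᗮ = m := by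
    have h1 := Submodule.finrank_add_finrank_orthogonal (K := F)
    rw [htot, hker] at h1
    omega
  set gb : OrthonormalBasis (Fin m) ℂ Fᗮ :=
    (stdOrthonormalBasis ℂ Fᗮ).reindex (finCongr hFp) with hgb
  set g : Fin m → EuclideanSpace ℂ (Fin n) := fun c => (gb c : EuclideanSpace ℂ (Fin n)) with hgdef
  have hgF : ∀ c, g c ∈ Fᗮ := fun c => (gb c).2
  have hg : Orthonormal ℂ g := by
    rw [orthonormal_iff_ite]
    intro i j
    have h1 := orthonormal_iff_ite.mp gb.orthonormal i j
    rwa [Submodule.coe_inner] at h1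
  set v : Fin m ⊕ Fin k → EuclideanSpace ℂ (Fin n) := Sum.elim g f with hvdef
  set u : Fin m ⊕ Fin k → EuclideanSpace ℂ (Fin n) := Sum.elim e f with hudef
  have hv : Orthonormal ℂ v := by
    rw [orthonormal_iff_ite]
    rintro (c | b) (c' | b')
    · simpa [hvdef] using orthonormal_iff_ite.mp hg c c'
    · simpa [hvdef] using Submodule.inner_left_of_mem_orthogonal (hfF b') (hgF c)
    · simpa [hvdef] using Submodule.inner_right_of_mem_orthogonal (hfF b) (hgF c')
    · simpa [hvdef] using orthonormal_iff_ite.mp hf b b'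
  have hcard : Fintype.card (Fin m ⊕ Fin k) = n := by simp [hk]
  have hexp : ∀ x : EuclideanSpace ℂ (Fin n),
      x = ∑ s, (inner ℂ (v s) x : ℂ) • v s := my_exp v hv hcard
  set σ : (Fin m ⊕ Fin k) ≃ Fin n := finSumFinEquiv.trans (finCongr hk) with hσ
  set α : Matrix (Fin m) (Fin m) ℂ := Matrix.of fun c a => (inner ℂ (g c) (e a) : ℂ) with hα
  set β : Matrix (Fin k) (Fin m) ℂ := Matrix.of fun b a => (inner ℂ (f b) (e a) : ℂ) with hβ
  set N : Matrix (Fin n) (Fin n) ℂ := Matrix.of fun i p => v (σ.symm p) i with hN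
  set L : Matrix (Fin n) (Fin n) ℂ :=
    Matrix.of fun p q => (inner ℂ (v (σ.symm p)) (u (σ.symm q)) : ℂ) with hL
  set M : Matrix (Fin n) (Fin n) ℂ := Matrix.of fun i j =>
      Sum.elim (fun a => e a i) (fun b => f b i) (finSumFinEquiv.symm (Fin.cast hk.symm j))
    with hM
  have hσj : ∀ j : Fin n, σ.symm j = finSumFinEquiv.symm (Fin.cast hk.symm j) := fun j => rfl
  have hMu : ∀ i j, M i j = u (σ.symm j) i := by
    intro i j
    rw [hM, hσj]
    cases h : finSumFinEquiv.symm (Fin.cast hk.symm j) <;> simp [hudef, h]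
  have hML : M = N * L := by
    ext i q
    rw [Matrix.mul_apply, hMu]
    calc u (σ.symm q) i = (∑ s, (inner ℂ (v s) (u (σ.symm q)) : ℂ) • v s) i := by
          rw [← hexp (u (σ.symm q))]
      _ = ∑ s, (inner ℂ (v s) (u (σ.symm q)) : ℂ) * v s i := by
          rw [euclid_sum_apply]
          exact Finset.sum_congr rfl fun s _ => rfl
      _ = ∑ s, v s i * (inner ℂ (v s) (u (σ.symm q)) : ℂ) :=
          Finset.sum_congr rfl fun s _ => mul_comm _ _
      _ = ∑ p : Fin n, v (σ.symm p) i * (inner ℂ (v (σ.symm p)) (u (σ.symm q)) : ℂ) :=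
          (Equiv.sum_comp σ.symm _).symm
      _ = ∑ p : Fin n, N i p * L p q := by
          simp only [hN, hL, Matrix.of_apply]
  have hNdet : ‖N.det‖ = 1 :=
    my_abs_det_orthonormal (fun p => v (σ.symm p)) (hv.comp _ σ.symm.injective)
  have hLsub : L = (Matrix.fromBlocks α (0 : Matrix (Fin m) (Fin k) ℂ) β
      (1 : Matrix (Fin k) (Fin k) ℂ)).submatrix σ.symm σ.symm := by
    ext p q
    rw [Matrix.submatrix_apply]
    show (inner ℂ (v (σ.symm p)) (u (σ.symm q)) : ℂ) = _
    rcases σ.symm p with c | b <;> rcases σ.symm q with a | b'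
    · rfl
    · simpa [hvdef, hudef] using Submodule.inner_left_of_mem_orthogonal (hfF b') (hgF c)
    · rfl
    · simpa [Matrix.one_apply, hvdef, hudef] using orthonormal_iff_ite.mp hf b b'
  have hdetL : L.det = α.det := by
    rw [hLsub, Matrix.det_submatrix_equiv_self, Matrix.det_fromBlocks_zero₁₂,
      Matrix.det_one, mul_one]
  have hdetM : ‖M.det‖ = ‖α.det‖ := by
    rw [hML, Matrix.det_mul, norm_mul, hNdet, one_mul, hdetL]
  -- matrices of Γ restricted to e and g
  set A : Matrix (Fin m) (Fin m) ℂ := Matrix.of fun i a => Γ (e a) i with hA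
  set B : Matrix (Fin m) (Fin m) ℂ := Matrix.of fun i c => Γ (g c) i with hB
  have hABα : A = B * α := by
    ext i a
    rw [Matrix.mul_apply]
    have h1 : Γ (e a) = ∑ s, (inner ℂ (v s) (e a) : ℂ) • Γ (v s) := by
      conv_lhs => rw [hexp (e a)]
      rw [map_sum]
      exact Finset.sum_congr rfl fun s _ => by rw [_root_.map_smul]
    have h2 : Γ (e a) i = ∑ s, (inner ℂ (v s) (e a) : ℂ) * Γ (v s) i := by
      rw [h1, euclid_sum_apply]
      exact Finset.sum_congr rfl fun s _ => rfl
    calc A i a = ∑ s, (inner ℂ (v s) (e a) : ℂ) * Γ (v s) i := h2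
      _ = (∑ c, (inner ℂ (g c) (e a) : ℂ) * Γ (g c) i)
          + ∑ b, (inner ℂ (f b) (e a) : ℂ) * Γ (f b) i := Fintype.sum_sum_type _
      _ = ∑ c, B i c * α c a := by
          have hz : ∀ b, Γ (f b) i = 0 := fun b => by rw [hΓf b]; rfl
          simp only [hz, mul_zero, Finset.sum_const_zero, add_zero]
          exact Finset.sum_congr rfl fun c _ => mul_comm _ _
  have hAx : ∀ x : EuclideanSpace ℂ (Fin m),
      Matrix.toEuclideanLin A x = Γ (∑ a, x a • e a) := by
    intro x
    ext i
    have h1 : Γ (∑ a, x a • e a) i = ∑ a, x a * Γ (e a) i := by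
      rw [map_sum, euclid_sum_apply]
      refine Finset.sum_congr rfl fun a _ => ?_
      rw [_root_.map_smul]
      rfl
    rw [h1, Matrix.toEuclideanLin_apply]
    simp only [PiLp.toLp_apply, WithLp.ofLp_toLp, Matrix.mulVec, dotProduct, hA, Matrix.of_apply]
    exact Finset.sum_congr rfl fun a _ => mul_comm _ _
  have hBx : ∀ x : EuclideanSpace ℂ (Fin m),
      Matrix.toEuclideanLin B x = Γ (∑ c, x c • g c) := by
    intro x
    ext i
    have h1 : Γ (∑ c, x c • g c) i = ∑ c, x c * Γ (g c) i := by
      rw [map_sum, euclid_sum_apply]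
      refine Finset.sum_congr rfl fun c _ => ?_
      rw [_root_.map_smul]
      rfl
    rw [h1, Matrix.toEuclideanLin_apply]
    simp only [PiLp.toLp_apply, WithLp.ofLp_toLp, Matrix.mulVec, dotProduct, hB, Matrix.of_apply]
    exact Finset.sum_congr rfl fun c _ => mul_comm _ _
  have hAlow : ∀ x : EuclideanSpace ℂ (Fin m), C⁻¹ * ‖x‖ ≤ ‖Matrix.toEuclideanLin A x‖ := by
    intro x
    rw [hAx, ← my_norm_sum e he x]
    have hU : (∑ a, x a • e a) ∈ E :=
      Submodule.sum_mem _ fun a _ => Submodule.smul_mem _ _ (heE' a)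
    rw [inv_mul_le_iff₀ hC]
    exact hest _ hU
  have hBup : ∀ y : EuclideanSpace ℂ (Fin m), ‖Matrix.toEuclideanLin B y‖ ≤ ‖Γ‖ * ‖y‖ := by
    intro y
    rw [hBx, ← my_norm_sum g hg y]
    exact Γ.le_opNorm _
  have hlowA : C⁻¹ ^ m ≤ ‖A.det‖ := my_det_lower A (by positivity) hAlow
  have hupB : ‖B.det‖ ≤ ‖Γ‖ ^ m := my_det_upper B (norm_nonneg Γ) hBup
  -- conclude
  show ((C * ‖Γ‖)⁻¹) ^ m ≤ ‖M.det‖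
  rw [hdetM]
  rcases Nat.eq_zero_or_pos m with hm | hm
  · subst hm
    rw [pow_zero, Matrix.det_isEmpty, norm_one]
  · have hΓpos : 0 < ‖Γ‖ := by
      rcases (norm_nonneg Γ).lt_or_eq with h | h
      · exact h
      · exfalso
        have hΓ0 : Γ = 0 := norm_eq_zero.mp h.symm
        have h1 := hest (e ⟨0, hm⟩) (heE' ⟨0, hm⟩)
        rw [hΓ0] at h1
        simp only [ContinuousLinearMap.zero_apply, norm_zero, mul_zero] at h1
        exact he.ne_zero ⟨0, hm⟩ (norm_le_zero_iff.mp h1)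
    have key : C⁻¹ ^ m ≤ ‖Γ‖ ^ m * ‖α.det‖ := by
      calc C⁻¹ ^ m ≤ ‖A.det‖ := hlowA
        _ = ‖B.det‖ * ‖α.det‖ := by rw [hABα, Matrix.det_mul, norm_mul]
        _ ≤ ‖Γ‖ ^ m * ‖α.det‖ :=
            mul_le_mul_of_nonneg_right hupB (norm_nonneg _)
    have hΓm : (0:ℝ) < ‖Γ‖ ^ m := pow_pos hΓpos m
    rw [mul_inv, mul_pow]
    calc C⁻¹ ^ m * (‖Γ‖⁻¹) ^ m ≤ (‖Γ‖ ^ m * ‖α.det‖) * (‖Γ‖⁻¹) ^ m :=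
          mul_le_mul_of_nonneg_right key (by positivity)
      _ = ‖α.det‖ := by
          rw [inv_pow]
          field_simp
end
end

section
/- Let E ⊆ ℂⁿ be a subspace of dimension m and Γ : ℂⁿ → ℂᵐ a surjective linear map with E ∩ ker Γ = {0}. Let π = Γ*(ΓΓ*)⁻¹Γ be the orthogonal projector onto (ker Γ)ᗮ. Then there exist orthonormal bases {e_j} of E and {f_j} of (ker Γ)ᗮ and scalars 0 < λ_j ≤ 1 such that π e_j = λ_j f_j for all j, and |det(E, ker Γ)| = ∏_j λ_j. -/
open scoped InnerProductSpace ComplexConjugate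

lemma aux_abs_det_orthonormal {ι : Type*} [Fintype ι] [DecidableEq ι] {n : ℕ}
    (w : ι → EuclideanSpace ℂ (Fin n)) (hw : Orthonormal ℂ w) (σ : ι ≃ Fin n) :
    ‖Matrix.det (Matrix.of fun p q : ι => w q (σ p))‖ = 1 := by
  set N : Matrix ι ι ℂ := Matrix.of fun p q : ι => w q (σ p) with hN
  have hmul : N.conjTranspose * N = 1 := by
    ext q q'
    simp only [Matrix.mul_apply, Matrix.conjTranspose_apply, hN, Matrix.of_apply]
    have : ∑ p : ι, star (w q (σ p)) * w q' (σ p)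
        = ∑ i : Fin n, star (w q i) * w q' i := Fintype.sum_equiv σ _ _ (fun p => rfl)
    rw [this]
    have hinner : (inner ℂ (w q) (w q') : ℂ) = ∑ i : Fin n, star (w q i) * w q' i := by
      simp [PiLp.inner_apply, RCLike.inner_apply, mul_comm]
    rw [← hinner]
    rcases eq_or_ne q q' with h | h
    · subst h; simp [hw.1 q, inner_self_eq_norm_sq_to_K, Matrix.one_apply]
    · rw [hw.2 h]; simp [Matrix.one_apply, h]
  have hdet : star N.det * N.det = 1 := by
    have := congrArg Matrix.det hmul
    rwa [Matrix.det_mul, Matrix.det_conjTranspose, Matrix.det_one] at this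
  have : Complex.normSq N.det = 1 := by
    have h1 : (Complex.normSq N.det : ℂ) = 1 := by
      rw [Complex.normSq_eq_conj_mul_self, ← Complex.star_def]; exact hdet
    exact_mod_cast h1
  have h2 : ‖N.det‖ ^ 2 = 1 := by
    rw [Complex.sq_norm]; exact this
  nlinarith [norm_nonneg N.det, h2]

lemma aux_det_formula {n m k : ℕ} (hk : m + k = n)
    (e f : Fin m → EuclideanSpace ℂ (Fin n)) (g : Fin k → EuclideanSpace ℂ (Fin n))
    (lam : Fin m → ℝ) (hlam : ∀ j, 0 < lam j)
    (hw : Orthonormal ℂ (Sum.elim f g))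
    (hdec : ∀ j, ∃ c : Fin k → ℂ, e j = (lam j : ℂ) • f j + ∑ b, c b • g b) :
    ‖Matrix.det (Matrix.of fun i j : Fin n =>
          Sum.elim (fun a => e a i) (fun b => g b i) (finSumFinEquiv.symm (Fin.cast hk.symm j)))‖
      = ∏ j, lam j := by
  classical
  choose c hc using hdec
  set σ : (Fin m ⊕ Fin k) ≃ Fin n := finSumFinEquiv.trans (finCongr hk) with hσ
  set M' : Matrix (Fin m ⊕ Fin k) (Fin m ⊕ Fin k) ℂ :=
    Matrix.of fun p q => (Sum.elim e g q) (σ p) with hM'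
  set N : Matrix (Fin m ⊕ Fin k) (Fin m ⊕ Fin k) ℂ :=
    Matrix.of fun p q => (Sum.elim f g q) (σ p) with hNdef
  set A : Matrix (Fin m ⊕ Fin k) (Fin m ⊕ Fin k) ℂ :=
    Matrix.fromBlocks (Matrix.diagonal fun j => (lam j : ℂ)) 0 (Matrix.of fun b j => c j b) 1
    with hA
  have hM : (Matrix.of fun i j : Fin n =>
          Sum.elim (fun a => e a i) (fun b => g b i) (finSumFinEquiv.symm (Fin.cast hk.symm j)))
      = M'.submatrix σ.symm σ.symm := by
    ext i j
    simp only [Matrix.submatrix_apply, Matrix.of_apply, hM']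
    have h1 : σ (σ.symm i) = i := σ.apply_symm_apply i
    have h2 : σ.symm j = finSumFinEquiv.symm (Fin.cast hk.symm j) := rfl
    rw [h1, ← h2]
    cases σ.symm j <;> rfl
  have hMN : M' = N * A := by
    ext p q
    rcases q with j | b
    · have hproj := congrArg (fun v => (EuclideanSpace.proj (σ p) : EuclideanSpace ℂ (Fin n) →L[ℂ] ℂ) v) (hc j)
      simp only [map_add, map_smul, map_sum, smul_eq_mul, PiLp.proj_apply] at hproj
      simp only [Matrix.mul_apply, Fintype.sum_sum_type, hNdef, hA, Matrix.of_apply,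
        Sum.elim_inl, Sum.elim_inr, Matrix.fromBlocks_apply₁₁, Matrix.fromBlocks_apply₂₁,
        Matrix.diagonal_apply, hM']
      rw [hproj]
      simp [Finset.sum_ite_eq, mul_comm]
    · simp [Matrix.mul_apply, Fintype.sum_sum_type, hNdef, hA, hM', Matrix.one_apply,
        Finset.sum_ite_eq]
  have hdetA : A.det = ∏ j, (lam j : ℂ) := by
    rw [hA, Matrix.det_fromBlocks_zero₁₂, Matrix.det_diagonal, Matrix.det_one, mul_one]
  have habsN : ‖N.det‖ = 1 := aux_abs_det_orthonormal (Sum.elim f g) hw σ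
  rw [hM, Matrix.det_submatrix_equiv_self, hMN, Matrix.det_mul, norm_mul, habsN, one_mul,
    hdetA, norm_prod]
  exact Finset.prod_congr rfl fun j _ => by
    rw [Complex.norm_real, Real.norm_eq_abs, abs_of_pos (hlam j)]

open ContinuousLinearMap in
set_option maxHeartbeats 1000000 in
/-- diagonalization of the orthogonal projector `π = Γ*(ΓΓ*)⁻¹Γ` onto
`(ker Γ)ᗮ` against orthonormal bases of `E` and `(ker Γ)ᗮ`, and the product formula
`|det(E, ker Γ)| = ∏ λ_j`. -/
theorem stmt_2 (n m k : ℕ) (hk : m + k = n)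
    (E : Submodule ℂ (EuclideanSpace ℂ (Fin n)))
    (Γ : EuclideanSpace ℂ (Fin n) →L[ℂ] EuclideanSpace ℂ (Fin m))
    (hsurj : Function.Surjective Γ)
    (hdim : Module.finrank ℂ E = m)
    (htrans : E ⊓ LinearMap.ker (Γ : EuclideanSpace ℂ (Fin n) →ₗ[ℂ] EuclideanSpace ℂ (Fin m)) = ⊥)
    (B : EuclideanSpace ℂ (Fin m) →L[ℂ] EuclideanSpace ℂ (Fin m))
    (hB : (Γ.comp (ContinuousLinearMap.adjoint Γ)).comp B = ContinuousLinearMap.id ℂ _)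
    (hB' : B.comp (Γ.comp (ContinuousLinearMap.adjoint Γ)) = ContinuousLinearMap.id ℂ _) :
    ∃ (e : Fin m → EuclideanSpace ℂ (Fin n)) (f : Fin m → EuclideanSpace ℂ (Fin n))
      (lam : Fin m → ℝ),
      Orthonormal ℂ e ∧ Submodule.span ℂ (Set.range e) = E ∧
      Orthonormal ℂ f ∧ (∀ j, f j ∈ (LinearMap.ker (Γ : EuclideanSpace ℂ (Fin n) →ₗ[ℂ] EuclideanSpace ℂ (Fin m)))ᗮ) ∧
      (∀ j, 0 < lam j ∧ lam j ≤ 1) ∧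
      (∀ j, ((ContinuousLinearMap.adjoint Γ).comp (B.comp Γ)) (e j) = (lam j : ℂ) • f j) ∧
      (∀ g : Fin k → EuclideanSpace ℂ (Fin n), Orthonormal ℂ g →
        Submodule.span ℂ (Set.range g) = LinearMap.ker (Γ : EuclideanSpace ℂ (Fin n) →ₗ[ℂ] EuclideanSpace ℂ (Fin m)) →
        ‖Matrix.det (Matrix.of fun i j : Fin n =>
          Sum.elim (fun a => e a i) (fun b => g b i) (finSumFinEquiv.symm (Fin.cast hk.symm j)))‖
          = ∏ j, lam j) := by
  classical
  set π : EuclideanSpace ℂ (Fin n) →L[ℂ] EuclideanSpace ℂ (Fin n) :=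
    (adjoint Γ).comp (B.comp Γ) with hπdef
  have hΓπ : ∀ x, Γ (π x) = Γ x := by
    intro x
    have := ContinuousLinearMap.ext_iff.mp hB (Γ x)
    simpa [hπdef] using this
  -- self-adjointness of π
  have hGadj : adjoint (Γ.comp (adjoint Γ)) = Γ.comp (adjoint Γ) := by
    rw [adjoint_comp, adjoint_adjoint]
  have h1 : (adjoint B).comp (Γ.comp (adjoint Γ)) = ContinuousLinearMap.id ℂ _ := by
    calc (adjoint B).comp (Γ.comp (adjoint Γ))
        = (adjoint B).comp (adjoint (Γ.comp (adjoint Γ))) := by rw [hGadj]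
      _ = adjoint ((Γ.comp (adjoint Γ)).comp B) := (adjoint_comp _ _).symm
      _ = adjoint (ContinuousLinearMap.id ℂ _) := by rw [hB]
      _ = ContinuousLinearMap.id ℂ _ := adjoint_id
  have hBadj : adjoint B = B := by
    calc adjoint B = (adjoint B).comp ((Γ.comp (adjoint Γ)).comp B) := by
          rw [hB, ContinuousLinearMap.comp_id]
      _ = ((adjoint B).comp (Γ.comp (adjoint Γ))).comp B := (comp_assoc _ _ _).symm
      _ = B := by rw [h1, ContinuousLinearMap.id_comp]
  have hπadj : adjoint π = π := by
    rw [hπdef, adjoint_comp, adjoint_comp, adjoint_adjoint, hBadj, comp_assoc]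
  have hsym : ∀ x y : EuclideanSpace ℂ (Fin n), (inner ℂ (π x) y : ℂ) = inner ℂ x (π y) := by
    intro x y
    conv_lhs => rw [← hπadj]
    exact ContinuousLinearMap.adjoint_inner_left π y x
  have hππ : ∀ x, π (π x) = π x := by
    intro x
    have : π (π x) = (adjoint Γ) (B (Γ (π x))) := rfl
    rw [this, hΓπ x]; rfl
  have hπinner : ∀ x y, (inner ℂ (π x) (π y) : ℂ) = inner ℂ x (π y) := by
    intro x y; rw [hsym x (π y), hππ]
  have hcontr : ∀ x : EuclideanSpace ℂ (Fin n), ‖π x‖ ≤ ‖x‖ := by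
    intro x
    have h2 : ‖π x‖ ^ 2 = RCLike.re (inner ℂ x (π x) : ℂ) := by
      rw [← hπinner x x]
      exact (inner_self_eq_norm_sq (𝕜 := ℂ) (π x)).symm
    have h3 : RCLike.re (inner ℂ x (π x) : ℂ) ≤ ‖x‖ * ‖π x‖ := re_inner_le_norm x (π x)
    nlinarith [norm_nonneg (π x), norm_nonneg x]
  -- orthonormal family u spanning E
  have : FiniteDimensional ℂ E := inferInstance
  obtain ⟨u, hu_orth, hu_mem⟩ :
      ∃ u : Fin m → EuclideanSpace ℂ (Fin n), Orthonormal ℂ u ∧ ∀ i, u i ∈ E := by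
    let b0 := stdOrthonormalBasis ℂ E
    let b := b0.reindex (finCongr (by rw [hdim]))
    exact ⟨fun i => ((b i : E) : EuclideanSpace ℂ (Fin n)),
      b.orthonormal.comp_linearIsometry E.subtypeₗᵢ, fun i => (b i).2⟩
  -- the embedding J of ℂ^m onto E
  set J : EuclideanSpace ℂ (Fin m) →L[ℂ] EuclideanSpace ℂ (Fin n) :=
    ∑ i : Fin m, (EuclideanSpace.proj i).smulRight (u i) with hJdef
  have hJapp : ∀ x, J x = ∑ i, x i • u i := by
    intro x
    simp [hJdef, ContinuousLinearMap.sum_apply]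
  have hJ_inner : ∀ a b : EuclideanSpace ℂ (Fin m),
      (inner ℂ (J a) (J b) : ℂ) = inner ℂ a b := by
    intro a b
    rw [hJapp, hJapp, sum_inner]
    have h1 : ∀ i, (inner ℂ (a i • u i) (∑ j, b j • u j) : ℂ)
        = (starRingEnd ℂ) (a i) * b i := by
      intro i
      rw [inner_smul_left, inner_sum]
      congr 1
      have : ∀ j, (inner ℂ (u i) (b j • u j) : ℂ)
          = b j * (if i = j then 1 else 0) := by
        intro j
        rw [inner_smul_right, orthonormal_iff_ite.mp hu_orth]
      simp [this]
    simp only [h1]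
    simp [PiLp.inner_apply, RCLike.inner_apply, mul_comm]
  -- the symmetric operator T = J* π J on ℂ^m
  set T : EuclideanSpace ℂ (Fin m) →L[ℂ] EuclideanSpace ℂ (Fin m) :=
    (adjoint J).comp (π.comp J) with hTdef
  have hTadj : adjoint T = T := by
    rw [hTdef, adjoint_comp, adjoint_comp, adjoint_adjoint, hπadj, comp_assoc]
  have hTsym : (T : EuclideanSpace ℂ (Fin m) →ₗ[ℂ] EuclideanSpace ℂ (Fin m)).IsSymmetric :=
    (ContinuousLinearMap.isSelfAdjoint_iff'.mpr hTadj).isSymmetric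
  have hm : Module.finrank ℂ (EuclideanSpace ℂ (Fin m)) = m := by
    simp [finrank_euclideanSpace_fin]
  set w := hTsym.eigenvectorBasis hm with hwdef
  set mu := hTsym.eigenvalues hm with hmudef
  set e : Fin m → EuclideanSpace ℂ (Fin n) := fun j => J (w j) with hedef
  have he_orth : Orthonormal ℂ e := by
    rw [orthonormal_iff_ite]
    intro i j
    rw [hedef]
    simp only []
    rw [hJ_inner, orthonormal_iff_ite.mp w.orthonormal]
  have he_mem : ∀ j, e j ∈ E := by
    intro j
    rw [hedef]
    simp only [hJapp]
    exact Submodule.sum_mem E fun i _ => Submodule.smul_mem E _ (hu_mem i)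
  have he_span : Submodule.span ℂ (Set.range e) = E := by
    have hle : Submodule.span ℂ (Set.range e) ≤ E := by
      rw [Submodule.span_le]
      rintro _ ⟨j, rfl⟩
      exact he_mem j
    have hli : LinearIndependent ℂ e := he_orth.linearIndependent
    apply Submodule.eq_of_le_of_finrank_eq hle
    rw [finrank_span_eq_card hli, Fintype.card_fin, hdim]
  have hinner_pi : ∀ i j, (inner ℂ (e i) (π (e j)) : ℂ) = if i = j then (mu j : ℂ) else 0 := by
    intro i j
    have h1 : (inner ℂ (e i) (π (e j)) : ℂ)
        = inner ℂ (w i) ((adjoint J) (π (J (w j)))) :=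
      (ContinuousLinearMap.adjoint_inner_right J (w i) (π (J (w j)))).symm
    rw [hedef] at h1 ⊢
    have h2 : (adjoint J) (π (J (w j))) = (mu j : ℂ) • w j := hTsym.apply_eigenvectorBasis hm j
    rw [h1, h2, inner_smul_right, orthonormal_iff_ite.mp w.orthonormal]
    simp [mul_ite]
  have hpipi_inner : ∀ i j, (inner ℂ (π (e i)) (π (e j)) : ℂ) = if i = j then (mu j : ℂ) else 0 :=
    fun i j => by rw [hπinner, hinner_pi]
  have hmu_eq : ∀ j, mu j = ‖π (e j)‖ ^ 2 := by
    intro j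
    have h1 : (inner ℂ (π (e j)) (π (e j)) : ℂ) = (mu j : ℂ) := by rw [hpipi_inner j j, if_pos rfl]
    rw [inner_self_eq_norm_sq_to_K] at h1
    have h2 : ((mu j : ℝ) : ℂ) = ((‖π (e j)‖ ^ 2 : ℝ) : ℂ) := by
      rw [← h1]; push_cast; rfl
    exact Complex.ofReal_inj.mp h2
  have hnorme : ∀ j, ‖e j‖ = 1 := fun j => he_orth.1 j
  have hpine : ∀ j, π (e j) ≠ 0 := by
    intro j hzero
    have hΓe : Γ (e j) = 0 := by rw [← hΓπ (e j), hzero, map_zero]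
    have hmem : e j ∈ E ⊓ LinearMap.ker (Γ : EuclideanSpace ℂ (Fin n) →ₗ[ℂ] EuclideanSpace ℂ (Fin m)) := ⟨he_mem j, hΓe⟩
    rw [htrans, Submodule.mem_bot] at hmem
    have h2 := hnorme j
    rw [hmem] at h2
    simp at h2
  have hmu_pos : ∀ j, 0 < mu j := by
    intro j
    rw [hmu_eq j]
    have := norm_pos_iff.mpr (hpine j)
    positivity
  have hmu_le : ∀ j, mu j ≤ 1 := by
    intro j
    rw [hmu_eq j]
    have := hcontr (e j)
    rw [hnorme j] at this
    nlinarith [norm_nonneg (π (e j))]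
  set lam : Fin m → ℝ := fun j => Real.sqrt (mu j) with hlamdef
  have hlam_pos : ∀ j, 0 < lam j := fun j => Real.sqrt_pos.mpr (hmu_pos j)
  have hlam_le : ∀ j, lam j ≤ 1 := fun j => Real.sqrt_le_one.mpr (hmu_le j)
  have hlam_ne : ∀ j, (lam j : ℂ) ≠ 0 := fun j =>
    Complex.ofReal_ne_zero.mpr (ne_of_gt (hlam_pos j))
  have hlam_sq : ∀ j, lam j * lam j = mu j := fun j => Real.mul_self_sqrt (le_of_lt (hmu_pos j))
  set f : Fin m → EuclideanSpace ℂ (Fin n) := fun j => ((lam j : ℂ))⁻¹ • π (e j) with hfdef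
  have hπe : ∀ j, π (e j) = (lam j : ℂ) • f j := by
    intro j
    rw [hfdef]
    simp only []
    rw [smul_smul, mul_inv_cancel₀ (hlam_ne j), one_smul]
  have hf_orth : Orthonormal ℂ f := by
    rw [orthonormal_iff_ite]
    intro i j
    rw [hfdef]
    simp only []
    rw [inner_smul_left, inner_smul_right, hpipi_inner, map_inv₀, Complex.conj_ofReal]
    rcases eq_or_ne i j with h | h
    · subst h
      simp only [if_pos rfl]
      have hmu : (mu i : ℂ) = (lam i : ℂ) * (lam i : ℂ) := by
        rw [← Complex.ofReal_mul, hlam_sq]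
      rw [hmu]
      field_simp
      simp [hlam_ne i]
    · simp [h]
  have hf_mem : ∀ j, f j ∈ (LinearMap.ker (Γ : EuclideanSpace ℂ (Fin n) →ₗ[ℂ] EuclideanSpace ℂ (Fin m)))ᗮ := by
    intro j
    rw [Submodule.mem_orthogonal]
    intro v hv
    rw [hfdef]
    simp only []
    rw [inner_smul_right]
    have h0 : (inner ℂ v (π (e j)) : ℂ) = inner ℂ (Γ v) (B (Γ (e j))) :=
      ContinuousLinearMap.adjoint_inner_right Γ v (B (Γ (e j)))
    have hv0 : Γ v = 0 := hv
    rw [h0, hv0, inner_zero_left, mul_zero]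
  refine ⟨e, f, lam, he_orth, he_span, hf_orth, hf_mem,
    fun j => ⟨hlam_pos j, hlam_le j⟩, hπe, ?_⟩
  intro g hg hgspan
  have hgmem : ∀ b, g b ∈ LinearMap.ker (Γ : EuclideanSpace ℂ (Fin n) →ₗ[ℂ] EuclideanSpace ℂ (Fin m)) := by
    intro b
    rw [← hgspan]
    exact Submodule.subset_span ⟨b, rfl⟩
  have hw : Orthonormal ℂ (Sum.elim f g) := by
    rw [orthonormal_iff_ite]
    rintro (i | b) (j | b')
    · simpa using orthonormal_iff_ite.mp hf_orth i j
    · simp only [Sum.elim_inl, Sum.elim_inr, reduceCtorEq, if_false]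
      exact inner_eq_zero_symm.mp
        (Submodule.inner_right_of_mem_orthogonal (hgmem b') (hf_mem i))
    · simp only [Sum.elim_inl, Sum.elim_inr, reduceCtorEq, if_false]
      exact Submodule.inner_right_of_mem_orthogonal (hgmem b) (hf_mem j)
    · simpa using orthonormal_iff_ite.mp hg b b'
  have hdec : ∀ j, ∃ c : Fin k → ℂ, e j = (lam j : ℂ) • f j + ∑ b, c b • g b := by
    intro j
    have hker : e j - (lam j : ℂ) • f j ∈ LinearMap.ker (Γ : EuclideanSpace ℂ (Fin n) →ₗ[ℂ] EuclideanSpace ℂ (Fin m)) := by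
      rw [← hπe j]
      have hΓ0 : Γ (e j - π (e j)) = 0 := by rw [map_sub, hΓπ, sub_self]
      exact hΓ0
    rw [← hgspan] at hker
    obtain ⟨c, hc⟩ := (Submodule.mem_span_range_iff_exists_fun ℂ).mp hker
    exact ⟨c, by rw [hc]; abel⟩
  exact aux_det_formula hk e f g lam hlam_pos hw hdec
end

section
/- Let M be a 2×2 complex matrix with entries a, b, c, d (rows (a,b),(c,d)). Then both eigenvalues of M have positive real part if and only if Re(a+d) > 0 and |Im f|² < 4(Re(a+d))²((Re(a+d))² − Re f), where f = (a−d)² + 4bc. -/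
/-- both eigenvalues of the 2×2 matrix `!![a,b;c,d]` have positive real
part iff `Re(a+d) > 0` and `|Im f|² < 4(Re(a+d))²((Re(a+d))² − Re f)`,
where `f = (a−d)² + 4bc`. -/
theorem stmt_3 (a b c d : ℂ) :
    (∀ μ ∈ spectrum ℂ (!![a, b; c, d]), 0 < μ.re) ↔
      (0 < (a + d).re ∧
        (((a - d) ^ 2 + 4 * b * c).im) ^ 2 <
          4 * ((a + d).re) ^ 2 * (((a + d).re) ^ 2 - ((a - d) ^ 2 + 4 * b * c).re)) := by
  have hmem : ∀ μ : ℂ, μ ∈ spectrum ℂ (!![a, b; c, d]) ↔ (μ - a) * (μ - d) - b * c = 0 := by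
    intro μ
    rw [spectrum.mem_iff, Matrix.isUnit_iff_isUnit_det, isUnit_iff_ne_zero, not_not]
    have : (algebraMap ℂ (Matrix (Fin 2) (Fin 2) ℂ) μ - !![a,b;c,d]).det
        = (μ - a) * (μ - d) - b * c := by
      rw [Matrix.det_fin_two]
      simp [Matrix.algebraMap_matrix_apply]
    rw [this]
  obtain ⟨s, hs⟩ : ∃ s : ℂ, s ^ 2 = (a - d) ^ 2 + 4 * b * c :=
    IsAlgClosed.exists_pow_nat_eq _ zero_lt_two
  have hroot : ∀ μ : ℂ, (μ - a) * (μ - d) - b * c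
      = (μ - (a + d + s) / 2) * (μ - (a + d - s) / 2) := by
    intro μ
    linear_combination ((1:ℂ)/4) * hs
  have key : (∀ μ ∈ spectrum ℂ (!![a, b; c, d]), 0 < μ.re) ↔
      (0 < ((a + d + s)/2).re ∧ 0 < ((a + d - s)/2).re) := by
    constructor
    · intro h
      refine ⟨h _ ((hmem _).2 ?_), h _ ((hmem _).2 ?_)⟩ <;> rw [hroot] <;> ring
    · rintro ⟨h1, h2⟩ μ hμ
      have h0 := (hmem μ).1 hμ
      rw [hroot] at h0
      rcases mul_eq_zero.1 h0 with h | h <;> rw [sub_eq_zero] at h <;> rw [h]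
      exacts [h1, h2]
  rw [key]
  have hre : ((a - d) ^ 2 + 4 * b * c).re = s.re ^ 2 - s.im ^ 2 := by
    rw [← hs]; simp [pow_two, Complex.mul_re]
  have him : ((a - d) ^ 2 + 4 * b * c).im = 2 * s.re * s.im := by
    rw [← hs]; simp [pow_two, Complex.mul_im]; ring
  have e1 : ((a + d + s)/2).re = ((a + d).re + s.re)/2 := by
    simp [Complex.div_re, Complex.normSq]
  have e2 : ((a + d - s)/2).re = ((a + d).re - s.re)/2 := by
    simp [Complex.div_re, Complex.normSq]
  rw [e1, e2, hre, him]
  set T := (a + d).re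
  set r := s.re
  set i := s.im
  constructor
  · rintro ⟨h1, h2⟩
    constructor
    · linarith
    · nlinarith [sq_nonneg i, sq_nonneg r, mul_pos h1 h2, sq_nonneg (T*i), sq_nonneg (r*i)]
  · rintro ⟨h1, h2⟩
    have hTi : 0 < T^2 + i^2 := by positivity
    have hr2 : r^2 < T^2 := by nlinarith [sq_nonneg i, sq_nonneg (r*i)]
    have hr := abs_lt_of_sq_lt_sq' hr2 h1.le
    constructor <;> linarith [hr.1, hr.2]
end

section
/- Let B be a 2×2 complex matrix with entries b₁₁, b₁₂, b₂₁, b₂₂ satisfying Re b₁₁ > 0, Re b₂₂ > 0, and |b₁₂b₂₁| + Re(b₁₂b₂₁) < 2 Re b₁₁ Re b₂₂. Then there exists δ > 0 such that for D = diag(1, δ), the matrix D B D⁻¹ has positive definite Hermitian part Re(DBD⁻¹). -/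
open scoped ComplexOrder Matrix

lemma posDef_fin_two (r s : ℝ) (m : ℂ) (hr : 0 < r) (hs : 0 < s)
    (hm : Complex.normSq m < r * s) :
    (!![(r : ℂ), m; (starRingEnd ℂ) m, (s : ℂ)]).PosDef := by
  rw [Matrix.posDef_iff_dotProduct_mulVec]
  constructor
  · ext i j
    fin_cases i <;> fin_cases j <;>
      simp [Matrix.conjTranspose_apply, Complex.conj_ofReal]
  · intro x hx
    have hx' : x 0 ≠ 0 ∨ x 1 ≠ 0 := by
      by_contra hc
      push_neg at hc
      apply hx
      ext i; fin_cases i <;> simp [hc.1, hc.2]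
    set a := (x 0).re; set b := (x 0).im; set c := (x 1).re; set d := (x 1).im
    have hmr : m.re ^ 2 + m.im ^ 2 < r * s := by
      have := hm; rw [Complex.normSq_apply] at this; nlinarith [this]
    have key : 0 < r * (a ^ 2 + b ^ 2) + s * (c ^ 2 + d ^ 2)
        + 2 * (m.re * (a * c + b * d) - m.im * (a * d - b * c)) := by
      rcases hx' with h0 | h1
      · have h0' : 0 < a ^ 2 + b ^ 2 := by
          have : a ≠ 0 ∨ b ≠ 0 := by
            by_contra hc; push_neg at hc
            exact h0 (Complex.ext (by simpa using hc.1) (by simpa using hc.2))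
          rcases this with h | h <;> positivity
        nlinarith [sq_nonneg (s*c + m.re*a + m.im*b), sq_nonneg (s*d - m.im*a + m.re*b),
          mul_pos (sub_pos.2 hmr) h0', sq_nonneg c, sq_nonneg d, hs.le]
      · have h1' : 0 < c ^ 2 + d ^ 2 := by
          have : c ≠ 0 ∨ d ≠ 0 := by
            by_contra hc; push_neg at hc
            exact h1 (Complex.ext (by simpa using hc.1) (by simpa using hc.2))
          rcases this with h | h <;> positivity
        nlinarith [sq_nonneg (r*a + m.re*c - m.im*d), sq_nonneg (r*b + m.re*d + m.im*c),
          mul_pos (sub_pos.2 hmr) h1', sq_nonneg a, sq_nonneg b, hr.le]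
    have : star x ⬝ᵥ ((!![(r : ℂ), m; (starRingEnd ℂ) m, (s : ℂ)]) *ᵥ x)
        = ((r * (a ^ 2 + b ^ 2) + s * (c ^ 2 + d ^ 2)
            + 2 * (m.re * (a * c + b * d) - m.im * (a * d - b * c)) : ℝ) : ℂ) := by
      simp [dotProduct, Matrix.mulVec, Fin.sum_univ_two, Matrix.cons_val_zero,
        Matrix.cons_val_one]
      apply Complex.ext <;> simp [Complex.add_re, Complex.add_im, Complex.mul_re,
        Complex.mul_im, ← Complex.ofReal_pow, Complex.ofReal_re, Complex.ofReal_im] <;> ring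
    rw [this]
    exact_mod_cast key

/-- under `Re b₁₁ > 0`, `Re b₂₂ > 0` and
`|b₁₂b₂₁| + Re(b₁₂b₂₁) < 2 Re b₁₁ Re b₂₂`, there is `δ > 0` such that with
`D = diag(1, δ)` the matrix `D B D⁻¹` has positive definite Hermitian part. -/
theorem stmt_5 (b11 b12 b21 b22 : ℂ)
    (h11 : 0 < b11.re) (h22 : 0 < b22.re)
    (h : ‖b12 * b21‖ + (b12 * b21).re < 2 * b11.re * b22.re) :
    ∃ δ : ℝ, 0 < δ ∧
      ((2 : ℂ)⁻¹ • ((!![(1 : ℂ), 0; 0, (δ : ℂ)] * !![b11, b12; b21, b22] *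
            (!![(1 : ℂ), 0; 0, (δ : ℂ)])⁻¹) +
          (!![(1 : ℂ), 0; 0, (δ : ℂ)] * !![b11, b12; b21, b22] *
            (!![(1 : ℂ), 0; 0, (δ : ℂ)])⁻¹)ᴴ)).PosDef := by
  set a := ‖b12‖ with ha
  set c := ‖b21‖ with hc
  have ha0 : 0 ≤ a := norm_nonneg _
  have hc0 : 0 ≤ c := norm_nonneg _
  have habs : a * c = ‖b12 * b21‖ := by rw [ha, hc, norm_mul]
  clear_value a c
  set ε := 2 * b11.re * b22.re - (‖b12 * b21‖ + (b12 * b21).re) with hε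
  have hε0 : 0 < ε := by rw [hε]; linarith
  clear_value ε
  set t := ε / (a + c + 1) with ht
  have ht0 : 0 < t := div_pos hε0 (by linarith)
  have htε : t * (a + c) ≤ ε := by
    rw [ht, div_mul_eq_mul_div, div_le_iff₀ (by linarith : (0:ℝ) < a + c + 1)]
    nlinarith [hε0.le]
  clear_value t
  have hnum : 0 < a + t := by linarith
  have hden : 0 < c + t := by linarith
  set δ := Real.sqrt ((a + t) / (c + t)) with hδ
  have hδ0 : 0 < δ := Real.sqrt_pos.2 (div_pos hnum hden)
  have hδ2 : δ ^ 2 = (a + t) / (c + t) := Real.sq_sqrt (div_pos hnum hden).le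
  clear_value δ
  have hδC : (δ : ℂ) ≠ 0 := by exact_mod_cast hδ0.ne'
  refine ⟨δ, hδ0, ?_⟩
  have hDinv : (!![(1 : ℂ), 0; 0, (δ : ℂ)])⁻¹ = !![(1 : ℂ), 0; 0, (δ : ℂ)⁻¹] := by
    apply Matrix.inv_eq_right_inv
    rw [Matrix.mul_fin_two]
    simp [mul_inv_cancel₀ hδC, Matrix.one_fin_two]
  set m := (2 : ℂ)⁻¹ * (b12 * (δ : ℂ)⁻¹ + (δ : ℂ) * (starRingEnd ℂ) b21) with hm
  have hmat : (2 : ℂ)⁻¹ • ((!![(1 : ℂ), 0; 0, (δ : ℂ)] * !![b11, b12; b21, b22] *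
            (!![(1 : ℂ), 0; 0, (δ : ℂ)])⁻¹) +
          (!![(1 : ℂ), 0; 0, (δ : ℂ)] * !![b11, b12; b21, b22] *
            (!![(1 : ℂ), 0; 0, (δ : ℂ)])⁻¹)ᴴ)
      = !![((b11.re : ℝ) : ℂ), m; (starRingEnd ℂ) m, ((b22.re : ℝ) : ℂ)] := by
    rw [hDinv, Matrix.mul_fin_two, Matrix.mul_fin_two]
    ext i j
    fin_cases i <;> fin_cases j <;>
      simp [Matrix.conjTranspose_apply, hm, Complex.conj_ofReal, Complex.add_conj, map_ofNat]
    · ring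
    · rw [mul_comm ((δ:ℂ)) b22, mul_assoc, mul_inv_cancel₀ hδC, mul_one,
        mul_comm ((δ:ℂ)) ((starRingEnd ℂ) b22), mul_assoc, mul_inv_cancel₀ hδC, mul_one,
        Complex.add_conj]
      push_cast; ring
  rw [hmat]
  apply posDef_fin_two _ _ _ h11 h22
  have hns : Complex.normSq m
      = (a ^ 2 / δ ^ 2 + δ ^ 2 * c ^ 2 + 2 * (b12 * b21).re) / 4 := by
    rw [hm, Complex.normSq_mul, Complex.normSq_add, Complex.normSq_mul,
      Complex.normSq_mul]
    have h1 : Complex.normSq ((2 : ℂ)⁻¹) = 1 / 4 := by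
      simp [Complex.normSq_inv]; norm_num [Complex.normSq_apply]
    have h2 : Complex.normSq ((δ : ℂ)⁻¹) = 1 / δ ^ 2 := by
      rw [Complex.normSq_inv, Complex.normSq_ofReal]; ring
    have h3 : Complex.normSq ((δ : ℂ)) = δ ^ 2 := by
      rw [Complex.normSq_ofReal]; ring
    have h4 : (b12 * (δ : ℂ)⁻¹ * (starRingEnd ℂ) ((δ : ℂ) * (starRingEnd ℂ) b21)).re
        = (b12 * b21).re := by
      have heq : (b12 * (δ : ℂ)⁻¹ * (starRingEnd ℂ) ((δ : ℂ) * (starRingEnd ℂ) b21))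
          = b12 * b21 := by
        simp only [map_mul, Complex.conj_conj, Complex.conj_ofReal]
        field_simp
      rw [heq]
    have h5 : Complex.normSq b12 = a ^ 2 := by rw [ha, Complex.sq_norm]
    have h6 : Complex.normSq ((starRingEnd ℂ) b21) = c ^ 2 := by
      rw [Complex.normSq_conj, hc, Complex.sq_norm]
    rw [h1, h2, h3, h4, h5, h6]
    ring
  rw [hns]
  have hA : a ^ 2 / δ ^ 2 ≤ a * (c + t) := by
    rw [hδ2, div_div_eq_mul_div, div_le_iff₀ hnum]
    nlinarith [mul_nonneg (mul_nonneg ha0 hden.le) ht0.le]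
  have hB : δ ^ 2 * c ^ 2 ≤ c * (a + t) := by
    rw [hδ2, div_mul_eq_mul_div, div_le_iff₀ hden]
    nlinarith [mul_nonneg (mul_nonneg hc0 hnum.le) ht0.le]
  have hre : (b12 * b21).re ≤ ‖b12 * b21‖ := Complex.re_le_norm _
  rw [div_lt_iff₀ (by norm_num : (0:ℝ) < 4)]
  nlinarith [hA, hB, htε, habs, hre, hε0, hε]
end

section
/- Let A = diag(1,−1) and B the 2×2 real matrix with rows (1,a),(a,1) with 0 < a < 1. For σ ∈ ℂ with Re σ ≥ 0 and ρ ≥ 0 with Re σ + ρ > 0, the matrix −A(σ I + ρ B) has no purely imaginary eigenvalue, and exactly one eigenvalue with negative real part. -/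
open Matrix

/-- for `Re σ ≥ 0`, `ρ ≥ 0`, `Re σ + ρ > 0`, the matrix `−A(σI + ρB)`
with `A = diag(1,−1)`, `B = !![1,a;a,1]`, `0 < a < 1`, has no purely imaginary
eigenvalue and exactly one eigenvalue with negative real part. -/
theorem stmt_8 (a : ℝ) (ha : 0 < a) (ha1 : a < 1) (σ : ℂ) (ρ : ℝ)
    (hσ : 0 ≤ σ.re) (hρ : 0 ≤ ρ) (hpos : 0 < σ.re + ρ)
    (M : Matrix (Fin 2) (Fin 2) ℂ)
    (hM : M = -(!![(1 : ℂ), 0; 0, -1] *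
      (σ • (1 : Matrix (Fin 2) (Fin 2) ℂ) + (ρ : ℂ) • !![(1 : ℂ), (a : ℂ); (a : ℂ), 1]))) :
    (∀ μ ∈ spectrum ℂ M, μ.re ≠ 0) ∧
    (∃! μ : ℂ, μ ∈ spectrum ℂ M ∧ μ.re < 0) := by
  set s : ℂ := σ + (ρ : ℂ) with hs
  set b : ℝ := ρ * a with hb
  have hx : 0 < s.re := by
    simp only [hs, Complex.add_re, Complex.ofReal_re]; linarith
  have hb0 : 0 ≤ b := mul_nonneg hρ ha.le
  have hbx : b < s.re := by
    have : s.re = σ.re + ρ := by simp [hs]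
    rw [this]
    rcases eq_or_lt_of_le hρ with h | h
    · simp [hb, ← h]; linarith
    · nlinarith
  have hM2 : M = !![-s, -(b : ℂ); (b : ℂ), s] := by
    subst hM
    ext i j
    fin_cases i <;> fin_cases j <;>
      simp [Matrix.mul_apply, Fin.sum_univ_two, hs, hb, Matrix.one_apply, Matrix.vecMul, dotProduct] <;> push_cast <;> ring
  have hspec : ∀ μ : ℂ, μ ∈ spectrum ℂ M ↔ μ ^ 2 = s ^ 2 - (b : ℂ) ^ 2 := by
    intro μ
    rw [spectrum.mem_iff, Matrix.isUnit_iff_isUnit_det, isUnit_iff_ne_zero, not_not]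
    have halg : (algebraMap ℂ (Matrix (Fin 2) (Fin 2) ℂ)) μ - M = !![μ + s, (b : ℂ); -(b : ℂ), μ - s] := by
      rw [hM2]
      ext i j
      fin_cases i <;> fin_cases j <;>
        simp [Matrix.algebraMap_matrix_apply] <;> ring
    rw [halg, Matrix.det_fin_two_of]
    constructor
    · intro h; have : μ ^ 2 - (s ^ 2 - (b : ℂ) ^ 2) = 0 := by rw [← h]; ring
      linear_combination this
    · intro h; linear_combination h
  have hne : ∀ μ : ℂ, μ ^ 2 = s ^ 2 - (b : ℂ) ^ 2 → μ.re ≠ 0 := by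
    intro μ h h0
    have h1 := congrArg Complex.re h
    have h2 := congrArg Complex.im h
    simp only [pow_two, Complex.mul_re, Complex.mul_im, Complex.sub_re, Complex.sub_im,
      Complex.ofReal_re, Complex.ofReal_im, h0] at h1 h2
    -- h2 : 0 = s.re*s.im + s.im*s.re - 0
    have hy : s.im = 0 := by nlinarith
    rw [hy] at h1
    nlinarith [sq_nonneg μ.im]
  obtain ⟨r, hr⟩ := IsAlgClosed.exists_pow_nat_eq (s ^ 2 - (b : ℂ) ^ 2) (n := 2) (by norm_num)
  have hrre : r.re ≠ 0 := hne r hr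
  set μ₀ : ℂ := if r.re < 0 then r else -r with hμ₀
  have hμ₀sq : μ₀ ^ 2 = s ^ 2 - (b : ℂ) ^ 2 := by
    rw [hμ₀]; split <;> simp [neg_pow, hr]
  have hμ₀re : μ₀.re < 0 := by
    by_cases h : r.re < 0
    · simpa [hμ₀, h] using h
    · have h' : 0 < r.re := lt_of_le_of_ne (not_lt.1 h) (Ne.symm hrre)
      simp only [hμ₀, h, if_false, Complex.neg_re]
      linarith
  constructor
  · intro μ hμ
    exact hne μ ((hspec μ).1 hμ)
  · refine ⟨μ₀, ⟨(hspec μ₀).2 hμ₀sq, hμ₀re⟩, ?_⟩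
    rintro ν ⟨hν, hνre⟩
    have hνsq := (hspec ν).1 hν
    have : (ν - μ₀) * (ν + μ₀) = 0 := by
      have : ν ^ 2 = μ₀ ^ 2 := by rw [hνsq, hμ₀sq]
      linear_combination this
    rcases mul_eq_zero.1 this with h | h
    · exact sub_eq_zero.1 h
    · exfalso
      have : ν = -μ₀ := by linear_combination h
      rw [this] at hνre
      simp only [Complex.neg_re] at hνre
      linarith
end

section
/- Let β₁,…,β_m be nonzero real numbers and B an m×m complex matrix. Suppose there is c > 0 such that for all ρ > 0 and all t ∈ ℝ the spectrum of i t·diag(β_j) + ρB lies in {Re μ ≥ cρ}. Then for all γ ≥ 0 and ρ ≥ 0 with γ + ρ > 0, the matrix diag(β_j⁻¹)(γ·Id + ρB) has no purely imaginary eigenvalue. -/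
open Matrix

/-- if for all `ρ > 0`, `t ∈ ℝ` the spectrum of
`it·diag(βⱼ) + ρB` lies in `{Re μ ≥ cρ}`, then for `γ, ρ ≥ 0` with `γ + ρ > 0` the
matrix `diag(βⱼ⁻¹)(γ Id + ρ B)` has no purely imaginary eigenvalue. -/
theorem stmt_17 (m : ℕ) (β : Fin m → ℝ) (hβ : ∀ j, β j ≠ 0)
    (B : Matrix (Fin m) (Fin m) ℂ) (c : ℝ) (hc : 0 < c)
    (hspec : ∀ ρ : ℝ, 0 < ρ → ∀ t : ℝ, ∀ μ ∈ spectrum ℂ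
      ((Complex.I * (t : ℂ)) • Matrix.diagonal (fun j => (β j : ℂ)) + (ρ : ℂ) • B),
      c * ρ ≤ μ.re) :
    ∀ γ ρ : ℝ, 0 ≤ γ → 0 ≤ ρ → 0 < γ + ρ →
      ∀ μ ∈ spectrum ℂ (Matrix.diagonal (fun j => ((β j : ℂ))⁻¹) *
        ((γ : ℂ) • (1 : Matrix (Fin m) (Fin m) ℂ) + (ρ : ℂ) • B)), μ.re ≠ 0 := by
  intro γ ρ hγ hρ hγρ μ hμ hre
  set D : Matrix (Fin m) (Fin m) ℂ := Matrix.diagonal (fun j => (β j : ℂ)) with hD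
  set Dinv : Matrix (Fin m) (Fin m) ℂ := Matrix.diagonal (fun j => ((β j : ℂ))⁻¹) with hDinv
  have hβc : ∀ j, (β j : ℂ) ≠ 0 := fun j => Complex.ofReal_ne_zero.mpr (hβ j)
  have hDinvD : Dinv * D = 1 := by
    rw [hD, hDinv, Matrix.diagonal_mul_diagonal]
    simp only [inv_mul_cancel₀ (hβc _)]
    exact Matrix.diagonal_one
  have hμeq : μ = Complex.I * (μ.im : ℂ) := by
    apply Complex.ext <;> simp [hre]
  set σ := μ.im with hσ
  rw [spectrum.mem_iff] at hμ
  have key : (algebraMap ℂ (Matrix (Fin m) (Fin m) ℂ)) μ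
      - Dinv * ((γ:ℂ) • 1 + (ρ:ℂ) • B)
      = Dinv * (μ • D - ((γ:ℂ) • 1 + (ρ:ℂ) • B)) := by
    rw [Matrix.mul_sub, Matrix.mul_smul, hDinvD, Algebra.algebraMap_eq_smul_one]
  have hUDinv : IsUnit Dinv := by
    rw [Matrix.isUnit_iff_isUnit_det, hDinv, Matrix.det_diagonal, isUnit_iff_ne_zero,
      Finset.prod_ne_zero_iff]
    intro j _
    exact inv_ne_zero (hβc j)
  have hX : ¬ IsUnit (μ • D - ((γ:ℂ) • 1 + (ρ:ℂ) • B)) := by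
    intro h
    exact hμ (key ▸ hUDinv.mul h)
  rcases lt_or_eq_of_le hρ with hρpos | hρ0
  · have heq : (algebraMap ℂ (Matrix (Fin m) (Fin m) ℂ)) (-(γ:ℂ))
        - ((Complex.I * ((-σ : ℝ):ℂ)) • D + (ρ:ℂ) • B)
        = μ • D - ((γ:ℂ) • 1 + (ρ:ℂ) • B) := by
      rw [Algebra.algebraMap_eq_smul_one, hμeq]
      push_cast
      module
    have hmem : (-(γ:ℂ)) ∈ spectrum ℂ ((Complex.I * ((-σ : ℝ):ℂ)) • D + (ρ:ℂ) • B) := by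
      rw [spectrum.mem_iff, heq]
      exact hX
    have hle := hspec ρ hρpos (-σ) _ hmem
    simp only [Complex.neg_re, Complex.ofReal_re] at hle
    nlinarith
  · have hγpos : 0 < γ := by linarith
    apply hX
    have heq2 : μ • D - ((γ:ℂ) • 1 + (ρ:ℂ) • B)
        = Matrix.diagonal (fun j => μ * (β j : ℂ) - (γ:ℂ)) := by
      rw [← hρ0]
      push_cast
      rw [hD]
      ext i j
      by_cases h : i = j <;>
        simp [Matrix.diagonal_apply, Matrix.one_apply, h, mul_comm]
    rw [heq2, Matrix.isUnit_iff_isUnit_det, Matrix.det_diagonal, isUnit_iff_ne_zero,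
      Finset.prod_ne_zero_iff]
    intro j _
    intro h0
    have : (μ * (β j : ℂ) - (γ:ℂ)).re = 0 := by rw [h0]; simp
    rw [hμeq] at this
    simp [Complex.mul_re] at this
    linarith
end
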